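/- Let G = ℤ, let A = {x, x⁻¹} map to the generator 1 of ℤ and its inverse, and let L = { xⁿ : n ∈ ℤ } (xx⁻¹)*. Then (A, L) is not a biautomatic structure: for every constant k there exist words w₁, w₂ ∈ L⁻¹ with π(w₁) = π(w₂) and D(w₁, w₂) > k; explicitly, the words (xx⁻¹)ⁿ xⁿ and xⁿ of L⁻¹ represent the same element of ℤ but satisfy D((xx⁻¹)ⁿ xⁿ, xⁿ) ≥ n. -/

import Mathlib

/-- The evaluation of a word over the alphabet `A` in the group `G`, via the letter map `φ`;
this is the monoid homomorphism `π : A* → G`. -/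
def evalWord {A G : Type*} [Group G] (φ : A → G) (w : List A) : G := (w.map φ).prod

/-- The word metric on `G` relative to the letter map `φ : A → G`:
`d(g,h)` is the least length of a word `u` with `π(u) = g⁻¹h`. -/
noncomputable def wordDist {A G : Type*} [Group G] (φ : A → G) (g h : G) : ℕ :=
  sInf {n | ∃ u : List A, u.length = n ∧ evalWord φ u = g⁻¹ * h}

/-- The synchronous uniform distance between two words: the maximum over `n` of the
word-metric distance between the values of the length-`n` prefixes. -/
noncomputable def unifDist {A G : Type*} [Group G] (φ : A → G) (w₁ w₂ : List A) : ℕ :=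
  sSup {m | ∃ n : ℕ, m = wordDist φ (evalWord φ (w₁.take n)) (evalWord φ (w₂.take n))}

/-- The formal inverse of a word: reverse it and invert each letter via `ι`. -/
def wordInv {A : Type*} (ι : A → A) (w : List A) : List A := w.reverse.map ι

/-- `(A, L)` is an automatic structure for the group `G` (with letter map `φ`):
`L` is regular, maps onto `G`, and satisfies the one-sided fellow traveller property. -/
def IsAutomaticStructure {A G : Type*} [Group G] (φ : A → G) (L : Language A) : Prop :=
  L.IsRegular ∧ (∀ g : G, ∃ w ∈ L, evalWord φ w = g) ∧
    ∃ k : ℕ, ∀ w₁ ∈ L, ∀ w₂ ∈ L, ∀ a : Option A,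
      evalWord φ (w₁ ++ a.toList) = evalWord φ w₂ →
        unifDist φ (w₁ ++ a.toList) w₂ ≤ k

/-- `(A, L)` is a biautomatic structure: both `(A, L)` and `(A, L⁻¹)` are automatic. -/
def IsBiautomaticStructure {A G : Type*} [Group G] (φ : A → G) (ι : A → A)
    (L : Language A) : Prop :=
  IsAutomaticStructure φ L ∧
    IsAutomaticStructure φ ((wordInv ι '' (L : Set (List A)) : Set (List A)) : Language A)

/-- The alphabet `A = {x, x⁻¹}`. -/
inductive ZLetter : Type
  | x : ZLetter
  | xi : ZLetter
  deriving DecidableEq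

instance : Fintype ZLetter := ⟨{.x, .xi}, fun a => by cases a <;> simp⟩

/-- The formal inversion on the alphabet `{x, x⁻¹}`. -/
def ZLetter.inv : ZLetter → ZLetter
  | .x => .xi
  | .xi => .x

/-- The letter map sending `x` to the generator `1` of `ℤ` (written multiplicatively)
and `x⁻¹` to its inverse. -/
def zLetterMap : ZLetter → Multiplicative ℤ
  | .x => Multiplicative.ofAdd 1
  | .xi => Multiplicative.ofAdd (-1)

/-- The word `xⁿ` for `n : ℤ`: `n` copies of `x` if `n ≥ 0`, and `-n` copies of `x⁻¹`
if `n < 0`. -/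
def zLetterZPow (n : ℤ) : List ZLetter :=
  if 0 ≤ n then List.replicate n.toNat .x else List.replicate (-n).toNat .xi

/-- The language `L = { xⁿ : n ∈ ℤ } (xx⁻¹)*`. -/
def zLangL : Language ZLetter :=
  {w | ∃ (n : ℤ) (c : ℕ),
    w = zLetterZPow n ++ (List.replicate c ([.x, .xi] : List ZLetter)).flatten}

/-!
Both `(xx⁻¹)ⁿ xⁿ` and `xⁿ` lie in `L⁻¹ = (xx⁻¹)* { xⁿ }` and represent `n`. After `2n` letters
the first word has returned to `0` while the second has reached `n`, and the word metric on `ℤ`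
is at least `|a - b|` because every letter moves by `±1`. Hence `D ≥ n`, so no constant `k` can
serve as a fellow-traveller bound for `L⁻¹`.
-/

open Multiplicative

section WordMetric

variable {A G : Type*} [Group G] (φ : A → G)

lemma evalWord_append (u v : List A) :
    evalWord φ (u ++ v) = evalWord φ u * evalWord φ v := by
  simp [evalWord]

lemma evalWord_flatten_replicate (n : ℕ) (w : List A) :
    evalWord φ (List.replicate n w).flatten = evalWord φ w ^ n := by
  simp [evalWord, List.map_flatten, List.prod_flatten, List.map_replicate]

lemma evalWord_replicate (n : ℕ) (a : A) :
    evalWord φ (List.replicate n a) = φ a ^ n := by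
  simp [evalWord, List.map_replicate]

lemma wordInv_append (ι : A → A) (u v : List A) :
    wordInv ι (u ++ v) = wordInv ι v ++ wordInv ι u := by
  simp [wordInv]

lemma wordInv_replicate (ι : A → A) (n : ℕ) (a : A) :
    wordInv ι (List.replicate n a) = List.replicate n (ι a) := by
  simp [wordInv]

lemma wordInv_flatten_replicate (ι : A → A) (n : ℕ) (w : List A) :
    wordInv ι (List.replicate n w).flatten = (List.replicate n (wordInv ι w)).flatten := by
  induction n with
  | zero => rfl
  | succ n ih =>
    rw [List.replicate_succ, List.flatten_cons, wordInv_append, ih, List.replicate_succ',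
      List.flatten_append, List.flatten_singleton]

lemma evalWord_wordInv {ι : A → A} (hι : ∀ a, φ (ι a) = (φ a)⁻¹) (w : List A) :
    evalWord φ (wordInv ι w) = (evalWord φ w)⁻¹ := by
  simp [evalWord, wordInv, List.prod_inv_reverse, Function.comp_def, hι]

lemma wordDist_le_length {g h : G} {u : List A} (hu : evalWord φ u = g⁻¹ * h) :
    wordDist φ g h ≤ u.length :=
  Nat.sInf_le ⟨u, rfl, hu⟩

lemma le_wordDist (ℓ : G → ℕ) (hℓ : ∀ u, ℓ (evalWord φ u) ≤ u.length) {g h : G}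
    (hreach : ∃ u, evalWord φ u = g⁻¹ * h) : ℓ (g⁻¹ * h) ≤ wordDist φ g h := by
  obtain ⟨u, hlen, hu⟩ := Nat.sInf_mem (s := {n | ∃ u : List A, u.length = n ∧
    evalWord φ u = g⁻¹ * h}) (let ⟨u, hu⟩ := hreach; ⟨u.length, u, rfl, hu⟩)
  rw [wordDist, ← hlen, ← hu]
  exact hℓ u

section Inversion

variable {φ} {ι : A → A} (hι : ∀ a, φ (ι a) = (φ a)⁻¹)
include hι

lemma wordDist_evalWord_le (u v : List A) :
    wordDist φ (evalWord φ u) (evalWord φ v) ≤ u.length + v.length := by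
  refine (wordDist_le_length φ (u := wordInv ι u ++ v) ?_).trans (by simp [wordInv])
  rw [evalWord_append, evalWord_wordInv φ hι]

lemma wordDist_take_le_unifDist (w₁ w₂ : List A) (n : ℕ) :
    wordDist φ (evalWord φ (w₁.take n)) (evalWord φ (w₂.take n)) ≤ unifDist φ w₁ w₂ := by
  -- `sSup` of an unbounded set of naturals is `0`, so the bound by lengths is essential.
  refine le_csSup ⟨w₁.length + w₂.length, ?_⟩ ⟨n, rfl⟩
  rintro _ ⟨m, rfl⟩
  exact (wordDist_evalWord_le hι _ _).trans
    (add_le_add (List.length_take_le' _ _) (List.length_take_le' _ _))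

end Inversion

lemma not_isAutomaticStructure_of_unbounded {L : Language A}
    (h : ∀ k : ℕ, ∃ w₁ ∈ L, ∃ w₂ ∈ L, evalWord φ w₁ = evalWord φ w₂ ∧ k < unifDist φ w₁ w₂) :
    ¬ IsAutomaticStructure φ L := by
  rintro ⟨-, -, k, hk⟩
  obtain ⟨w₁, h₁, w₂, h₂, heq, hlt⟩ := h k
  have := hk w₁ h₁ w₂ h₂ none (by simpa using heq)
  simp only [Option.toList, List.append_nil] at this
  omega

end WordMetric

lemma zLetterMap_inv (a : ZLetter) : zLetterMap a.inv = (zLetterMap a)⁻¹ := by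
  cases a <;> rfl

lemma natAbs_toAdd_evalWord_le (u : List ZLetter) :
    (toAdd (evalWord zLetterMap u)).natAbs ≤ u.length := by
  induction u with
  | nil => simp [evalWord]
  | cons a u ih =>
    have ha : (toAdd (zLetterMap a)).natAbs = 1 := by cases a <;> rfl
    have := Int.natAbs_add_le (toAdd (zLetterMap a)) (toAdd (evalWord zLetterMap u))
    simp only [evalWord, List.map_cons, List.prod_cons, toAdd_mul, List.length_cons] at ih ⊢
    omega

lemma zLetterZPow_neg_natCast (n : ℕ) : zLetterZPow (-n) = List.replicate n .xi := by
  unfold zLetterZPow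
  split_ifs with h
  · obtain rfl : n = 0 := by omega
    rfl
  · simp

lemma zLetterMap_x_pow (n : ℕ) : zLetterMap .x ^ n = ofAdd (n : ℤ) := by
  simp [zLetterMap, ← ofAdd_nsmul]

lemma evalWord_xxInv_pow (n : ℕ) :
    evalWord zLetterMap (List.replicate n ([.x, .xi] : List ZLetter)).flatten = 1 := by
  rw [evalWord_flatten_replicate, show evalWord zLetterMap [.x, .xi] = 1 from rfl, one_pow]

lemma xxInv_pow_append_x_pow_mem_zLangL_inv (n : ℕ) :
    ((List.replicate n ([.x, .xi] : List ZLetter)).flatten ++ List.replicate n ZLetter.x)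
      ∈ wordInv ZLetter.inv '' (zLangL : Set (List ZLetter)) := by
  refine ⟨zLetterZPow (-n) ++ (List.replicate n [.x, .xi]).flatten, ⟨-n, n, rfl⟩, ?_⟩
  rw [wordInv_append, wordInv_flatten_replicate, zLetterZPow_neg_natCast, wordInv_replicate]
  rfl

lemma x_pow_mem_zLangL_inv (n : ℕ) :
    List.replicate n ZLetter.x ∈ wordInv ZLetter.inv '' (zLangL : Set (List ZLetter)) := by
  refine ⟨zLetterZPow (-n), ⟨-n, 0, by simp⟩, ?_⟩
  rw [zLetterZPow_neg_natCast, wordInv_replicate]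
  rfl

lemma le_unifDist_xxInv_pow_append_x_pow (n : ℕ) :
    n ≤ unifDist zLetterMap
      ((List.replicate n ([.x, .xi] : List ZLetter)).flatten ++ List.replicate n ZLetter.x)
      (List.replicate n ZLetter.x) := by
  have h₁ : ((List.replicate n ([.x, .xi] : List ZLetter)).flatten ++
      List.replicate n ZLetter.x).take (2 * n) = (List.replicate n [.x, .xi]).flatten :=
    List.take_left' (by simp; ring)
  have h₂ : (List.replicate n ZLetter.x).take (2 * n) = List.replicate n ZLetter.x :=
    List.take_of_length_le (by simp; omega)
  calc n = (toAdd ((1 : Multiplicative ℤ)⁻¹ * ofAdd (n : ℤ))).natAbs := by simp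
    _ ≤ wordDist zLetterMap 1 (ofAdd (n : ℤ)) :=
      le_wordDist zLetterMap (fun g => (toAdd g).natAbs) natAbs_toAdd_evalWord_le
        ⟨List.replicate n .x, by rw [evalWord_replicate, zLetterMap_x_pow, inv_one, one_mul]⟩
    _ = _ := by rw [h₁, h₂, evalWord_xxInv_pow, evalWord_replicate, zLetterMap_x_pow]
    _ ≤ _ := wordDist_take_le_unifDist zLetterMap_inv _ _ (2 * n)

/-- `(A, L)` with `A = {x, x⁻¹}` and `L = { xⁿ : n ∈ ℤ } (xx⁻¹)*` is not a biautomatic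
structure: for every `k` there are words `w₁, w₂ ∈ L⁻¹` with `π(w₁) = π(w₂)` and
`D(w₁, w₂) > k`; explicitly, the words `(xx⁻¹)ⁿ xⁿ` and `xⁿ` of `L⁻¹` represent the same
element of `ℤ` but `D((xx⁻¹)ⁿ xⁿ, xⁿ) ≥ n`. -/
theorem zLangL_not_biautomatic :
    ¬ IsBiautomaticStructure zLetterMap ZLetter.inv zLangL ∧
    (∀ k : ℕ, ∃ w₁ ∈ wordInv ZLetter.inv '' (zLangL : Set (List ZLetter)),
      ∃ w₂ ∈ wordInv ZLetter.inv '' (zLangL : Set (List ZLetter)),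
        evalWord zLetterMap w₁ = evalWord zLetterMap w₂ ∧
        k < unifDist zLetterMap w₁ w₂) ∧
    (∀ n : ℕ,
      ((List.replicate n ([.x, .xi] : List ZLetter)).flatten ++ List.replicate n ZLetter.x)
          ∈ wordInv ZLetter.inv '' (zLangL : Set (List ZLetter)) ∧
      (List.replicate n ZLetter.x) ∈ wordInv ZLetter.inv '' (zLangL : Set (List ZLetter)) ∧
      evalWord zLetterMap
          ((List.replicate n ([.x, .xi] : List ZLetter)).flatten ++
            List.replicate n ZLetter.x) =
        evalWord zLetterMap (List.replicate n ZLetter.x) ∧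
      n ≤ unifDist zLetterMap
          ((List.replicate n ([.x, .xi] : List ZLetter)).flatten ++
            List.replicate n ZLetter.x)
          (List.replicate n ZLetter.x)) := by
  have heval (n : ℕ) : evalWord zLetterMap
      ((List.replicate n ([.x, .xi] : List ZLetter)).flatten ++ List.replicate n ZLetter.x) =
        evalWord zLetterMap (List.replicate n ZLetter.x) := by
    rw [evalWord_append, evalWord_xxInv_pow, one_mul]
  have hunbounded : ∀ k : ℕ, ∃ w₁ ∈ wordInv ZLetter.inv '' (zLangL : Set (List ZLetter)),
      ∃ w₂ ∈ wordInv ZLetter.inv '' (zLangL : Set (List ZLetter)),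
        evalWord zLetterMap w₁ = evalWord zLetterMap w₂ ∧ k < unifDist zLetterMap w₁ w₂ :=
    fun k => ⟨_, xxInv_pow_append_x_pow_mem_zLangL_inv (k + 1), _, x_pow_mem_zLangL_inv (k + 1),
      heval (k + 1), le_unifDist_xxInv_pow_append_x_pow (k + 1)⟩
  exact ⟨fun hbi => not_isAutomaticStructure_of_unbounded zLetterMap hunbounded hbi.2,
    hunbounded, fun n => ⟨xxInv_pow_append_x_pow_mem_zLangL_inv n, x_pow_mem_zLangL_inv n,
      heval n, le_unifDist_xxInv_pow_append_x_pow n⟩⟩
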